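/- arXiv:1404.1957 — 3 statements merged into one kernel-verified Lean document; each statement's English description precedes it below -/
import Mathlib

section
/- Let Q be a symmetric positive definite d×d real matrix and κ₀ > 0 be such that κ₀|y|² ≤ yᵀ(QR + RᵀQ)y for all y ∈ ℝ^d, and define V(x) := (xᵀQx)^{m/2}. Then there exists a constant C > 0 (depending only on Q, R, Γ, m, d) such that, setting δ := κ₀/(4C), for every u ∈ 𝒮 and every x ∈ ℝ^d with |x| ≥ 1 and (e·x)⁺ ≤ δ|x| one has ∇V(x)·b(x,u) ≤ ℓ·∇V(x) − (mκ₀/4)(xᵀQx)^{(m/2)−1}|x|². -/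
set_option autoImplicit false

open Matrix Set

noncomputable section

abbrev EucSp (d : ℕ) := EuclideanSpace ℝ (Fin d)

/-- The probability simplex in `ℝ^d`. -/
def simplex (d : ℕ) : Set (EucSp d) := {u | (∀ i, 0 ≤ u i) ∧ (∑ i, u i) = 1}

/-- First partial derivative `∂f/∂xᵢ`. -/
noncomputable def pd1 {d : ℕ} (f : EucSp d → ℝ) (i : Fin d) (x : EucSp d) : ℝ :=
  fderiv ℝ f x (EuclideanSpace.single i 1)

/-- The piecewise linear drift `b(x,u) = ℓ − R(x − (e·x)⁺u) − (e·x)⁺Γu`. -/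
noncomputable def qdrift {d : ℕ} (ℓ : EucSp d) (R Γ : Matrix (Fin d) (Fin d) ℝ)
    (x u : EucSp d) (i : Fin d) : ℝ :=
  ℓ i - R.mulVec (fun j => x j - max (∑ k, x k) 0 * u j) i
    - max (∑ k, x k) 0 * Γ.mulVec u i

/-- The quadratic form `xᵀQx`. -/
def quadForm {d : ℕ} (Q : Matrix (Fin d) (Fin d) ℝ) (x : EucSp d) : ℝ :=
  ∑ i, ∑ j, x i * (Q i j * x j)

/-- The Lyapunov candidate `V(x) = (xᵀQx)^{m/2}`. -/
noncomputable def Vq {d : ℕ} (Q : Matrix (Fin d) (Fin d) ℝ) (m : ℝ) (x : EucSp d) : ℝ :=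
  quadForm Q x ^ (m / 2)

/-! With `c = m (xᵀQx)^{m/2-1}` and `Q` symmetric, `∇V(x) = c Qx`, and the drift splits as
`b = ℓ - Rx + (e·x)⁺ (R - Γ)u`, so `∇V·b - ℓ·∇V = c ((e·x)⁺ xᵀQ(R - Γ)u - xᵀQRx)`.
Coercivity gives `xᵀQRx ≥ κ₀|x|²/2`, while `|u| ≤ 1` on the simplex bounds the cross term by
`(e·x)⁺ C|x|` with `C = 1 + ‖Q(R - Γ)‖`, which is at most `κ₀|x|²/4` once `(e·x)⁺ ≤ κ₀|x|/(4C)`. -/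

open WithLp

section EuclideanMatrix

variable {n : Type*} [Fintype n]

theorem EuclideanSpace.norm_le_sum_of_nonneg {u : EuclideanSpace ℝ n} (hu : ∀ i, 0 ≤ u i) :
    ‖u‖ ≤ ∑ i, u i :=
  calc ‖u‖ = √(∑ i, u i ^ 2) := by simp [EuclideanSpace.norm_eq]
    _ ≤ √((∑ i, u i) ^ 2) :=
        Real.sqrt_le_sqrt (Finset.sum_sq_le_sq_sum_of_nonneg fun i _ => hu i)
    _ = ∑ i, u i := Real.sqrt_sq (Finset.sum_nonneg fun i _ => hu i)

theorem mulVec_dotProduct_mulVec_of_isSymm {Q : Matrix n n ℝ} (hQ : Q.IsSymm)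
    (M : Matrix n n ℝ) (x v : n → ℝ) :
    Q *ᵥ x ⬝ᵥ M *ᵥ v = x ⬝ᵥ (Q * M) *ᵥ v := by
  rw [← mulVec_mulVec, dotProduct_mulVec x Q, ← mulVec_transpose, hQ.eq]

variable [DecidableEq n]

theorem dotProduct_mulVec_eq_inner (M : Matrix n n ℝ) (x y : EuclideanSpace ℝ n) :
    ofLp x ⬝ᵥ M *ᵥ ofLp y = inner ℝ x (toEuclideanCLM (𝕜 := ℝ) M y) := by
  rw [EuclideanSpace.inner_eq_star_dotProduct, ofLp_toEuclideanCLM, star_trivial, dotProduct_comm]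

theorem abs_dotProduct_mulVec_le (M : Matrix n n ℝ) (x y : EuclideanSpace ℝ n) :
    |ofLp x ⬝ᵥ M *ᵥ ofLp y| ≤ ‖toEuclideanCLM (𝕜 := ℝ) M‖ * ‖x‖ * ‖y‖ := by
  rw [dotProduct_mulVec_eq_inner]
  set A := toEuclideanCLM (𝕜 := ℝ) M
  calc |inner ℝ x (A y)| ≤ ‖x‖ * ‖A y‖ := abs_real_inner_le_norm _ _
    _ ≤ ‖x‖ * (‖A‖ * ‖y‖) := by gcongr; exact A.le_opNorm y
    _ = ‖A‖ * ‖x‖ * ‖y‖ := by ring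

end EuclideanMatrix

variable {d : ℕ}

theorem dotProduct_mulVec_le_of_mem_simplex (M : Matrix (Fin d) (Fin d) ℝ) (x : EucSp d)
    {u : EucSp d} (hu : u ∈ simplex d) :
    ofLp x ⬝ᵥ M *ᵥ ofLp u ≤ ‖toEuclideanCLM (𝕜 := ℝ) M‖ * ‖x‖ := by
  have hu1 : ‖u‖ ≤ 1 := hu.2 ▸ EuclideanSpace.norm_le_sum_of_nonneg hu.1
  calc ofLp x ⬝ᵥ M *ᵥ ofLp u ≤ ‖toEuclideanCLM (𝕜 := ℝ) M‖ * ‖x‖ * ‖u‖ :=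
        (le_abs_self _).trans (abs_dotProduct_mulVec_le M x u)
    _ ≤ ‖toEuclideanCLM (𝕜 := ℝ) M‖ * ‖x‖ := by
        apply mul_le_of_le_one_right (by positivity) hu1

theorem quadForm_eq_dotProduct (Q : Matrix (Fin d) (Fin d) ℝ) (x : EucSp d) :
    quadForm Q x = ofLp x ⬝ᵥ Q *ᵥ ofLp x := by
  simp [quadForm, dotProduct, mulVec, Finset.mul_sum]

theorem quadForm_add_transpose (M : Matrix (Fin d) (Fin d) ℝ) (x : EucSp d) :
    quadForm (M + Mᵀ) x = 2 * (ofLp x ⬝ᵥ M *ᵥ ofLp x) := by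
  rw [quadForm_eq_dotProduct, add_mulVec, dotProduct_add, mulVec_transpose,
    dotProduct_comm _ (ofLp x ᵥ* M), ← dotProduct_mulVec, two_mul]

theorem quadForm_pos {Q : Matrix (Fin d) (Fin d) ℝ} (hQ : Q.PosDef) {x : EucSp d} (hx : x ≠ 0) :
    0 < quadForm Q x := by
  rw [quadForm_eq_dotProduct]
  simpa using hQ.dotProduct_mulVec_pos (x := ofLp x) (by simpa using hx)

theorem hasFDerivAt_quadForm (Q : Matrix (Fin d) (Fin d) ℝ) (x : EucSp d) :
    HasFDerivAt (quadForm Q) ((fderivInnerCLM ℝ (x, toEuclideanCLM (𝕜 := ℝ) Q x)).comp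
      ((ContinuousLinearMap.id ℝ _).prod (toEuclideanCLM (𝕜 := ℝ) Q))) x := by
  have : quadForm Q = fun y => inner ℝ y (toEuclideanCLM (𝕜 := ℝ) Q y) := by
    ext y; rw [quadForm_eq_dotProduct, dotProduct_mulVec_eq_inner]
  rw [this]
  exact (hasFDerivAt_id x).inner ℝ (toEuclideanCLM (𝕜 := ℝ) Q).hasFDerivAt

theorem pd1_Vq {Q : Matrix (Fin d) (Fin d) ℝ} (hQ : Q.IsSymm) (m : ℝ) {x : EucSp d}
    (hx : quadForm Q x ≠ 0) (i : Fin d) :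
    pd1 (Vq Q m) i x = m * quadForm Q x ^ (m / 2 - 1) * (Q *ᵥ ofLp x) i := by
  have hV : HasFDerivAt (Vq Q m) _ x := (hasFDerivAt_quadForm Q x).rpow_const (Or.inl hx)
  rw [pd1, hV.fderiv]
  simp only [_root_.smul_apply, ContinuousLinearMap.comp_apply,
    ContinuousLinearMap.prod_apply, ContinuousLinearMap.id_apply, fderivInnerCLM_apply,
    ← dotProduct_mulVec_eq_inner, PiLp.ofLp_single, mulVec_single, MulOpposite.op_one, one_smul,
    EuclideanSpace.inner_single_left, Real.ringHom_apply, ofLp_toEuclideanCLM, one_mul, smul_eq_mul]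
  have hcol : ofLp x ⬝ᵥ Q.col i = (Q *ᵥ ofLp x) i := by
    conv_rhs => rw [← hQ.eq, mulVec_transpose]
    rfl
  rw [hcol]
  ring

theorem qdrift_eq (ℓ : EucSp d) (R Γ : Matrix (Fin d) (Fin d) ℝ) (x u : EucSp d) :
    qdrift ℓ R Γ x u =
      ofLp ℓ - R *ᵥ ofLp x + max (∑ i, x i) 0 • ((R - Γ) *ᵥ ofLp u) := by
  have hsub : (fun j => x j - max (∑ k, x k) 0 * u j) =
      ofLp x - max (∑ k, x k) 0 • ofLp u := rfl
  ext i
  simp only [qdrift, hsub, mulVec_sub, mulVec_smul, sub_mulVec, Pi.add_apply, Pi.sub_apply,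
    Pi.smul_apply, smul_eq_mul]
  ring

theorem sum_pd1_Vq_mul_qdrift {Q : Matrix (Fin d) (Fin d) ℝ} (hQ : Q.IsSymm) (m : ℝ)
    {x : EucSp d} (hx : quadForm Q x ≠ 0) (ℓ : EucSp d) (R Γ : Matrix (Fin d) (Fin d) ℝ)
    (u : EucSp d) :
    ∑ i, pd1 (Vq Q m) i x * qdrift ℓ R Γ x u i =
      ∑ i, ℓ i * pd1 (Vq Q m) i x + m * quadForm Q x ^ (m / 2 - 1) *
        (max (∑ i, x i) 0 * (ofLp x ⬝ᵥ (Q * (R - Γ)) *ᵥ ofLp u)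
          - ofLp x ⬝ᵥ (Q * R) *ᵥ ofLp x) := by
  have hgrad : (fun i => pd1 (Vq Q m) i x) = (m * quadForm Q x ^ (m / 2 - 1)) • (Q *ᵥ ofLp x) :=
    funext (pd1_Vq hQ m hx)
  change (fun i => pd1 (Vq Q m) i x) ⬝ᵥ qdrift ℓ R Γ x u =
    ofLp ℓ ⬝ᵥ (fun i => pd1 (Vq Q m) i x) + _
  rw [hgrad, qdrift_eq]
  simp only [dotProduct_add, dotProduct_sub, dotProduct_smul, smul_dotProduct, smul_eq_mul,
    mulVec_dotProduct_mulVec_of_isSymm hQ, dotProduct_comm (ofLp ℓ)]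
  ring

theorem stmt1_general (d : ℕ) (m : ℝ) (hm : 1 ≤ m)
    (ℓ : EucSp d) (R Γ Q : Matrix (Fin d) (Fin d) ℝ)
    (hQpos : Q.PosDef)
    (κ₀ : ℝ)
    (hQR : ∀ y : EucSp d,
      κ₀ * ‖y‖ ^ 2 ≤ ∑ i, ∑ j, y i * ((Q * R + Rᵀ * Q) i j * y j)) :
    ∃ C : ℝ, 0 < C ∧
      ∀ (u x : EucSp d), u ∈ simplex d → 1 ≤ ‖x‖ →
        max (∑ i, x i) 0 ≤ (κ₀ / (4 * C)) * ‖x‖ →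
        ∑ i, pd1 (Vq Q m) i x * qdrift ℓ R Γ x u i ≤
          ∑ i, ℓ i * pd1 (Vq Q m) i x
            - (m * κ₀ / 4) * quadForm Q x ^ (m / 2 - 1) * ‖x‖ ^ 2 := by
  have hQ : Q.IsSymm := isHermitian_iff_isSymm.mp hQpos.isHermitian
  set N := ‖toEuclideanCLM (𝕜 := ℝ) (Q * (R - Γ))‖
  have hN : 0 < 1 + N := by positivity
  refine ⟨1 + N, hN, fun u x hu hx hs => ?_⟩
  have hq : 0 < quadForm Q x := quadForm_pos hQpos (norm_pos_iff.mp (by linarith))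
  rw [sum_pd1_Vq_mul_qdrift hQ m hq.ne']
  set s := max (∑ i, x i) 0
  set A := ofLp x ⬝ᵥ (Q * R) *ᵥ ofLp x
  set B := ofLp x ⬝ᵥ (Q * (R - Γ)) *ᵥ ofLp u
  have hcoercive : κ₀ * ‖x‖ ^ 2 ≤ 2 * A := by
    rw [← quadForm_add_transpose, transpose_mul, hQ.eq]
    exact hQR x
  have hcross : s * B ≤ κ₀ / 4 * ‖x‖ ^ 2 :=
    calc s * B ≤ s * ((1 + N) * ‖x‖) := by
          refine mul_le_mul_of_nonneg_left ?_ (le_max_right _ _)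
          exact (dotProduct_mulVec_le_of_mem_simplex _ x hu).trans (by gcongr; linarith)
      _ ≤ κ₀ / (4 * (1 + N)) * ‖x‖ * ((1 + N) * ‖x‖) := by gcongr
      _ = κ₀ / 4 * ‖x‖ ^ 2 := by field_simp
  have hc : 0 ≤ m * quadForm Q x ^ (m / 2 - 1) := by positivity
  have := mul_le_mul_of_nonneg_left (show s * B - A ≤ -(κ₀ / 4 * ‖x‖ ^ 2) by linarith) hc
  linarith

theorem stmt1 (d : ℕ) (hd : 1 ≤ d) (m : ℝ) (hm : 1 ≤ m)
    (ℓ : EucSp d) (R Γ Q : Matrix (Fin d) (Fin d) ℝ)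
    (hQsymm : Q.IsSymm) (hQpos : Q.PosDef)
    (κ₀ : ℝ) (hκ₀ : 0 < κ₀)
    (hQR : ∀ y : EucSp d,
      κ₀ * ‖y‖ ^ 2 ≤ ∑ i, ∑ j, y i * ((Q * R + Rᵀ * Q) i j * y j)) :
    ∃ C : ℝ, 0 < C ∧
      ∀ (u x : EucSp d), u ∈ simplex d → 1 ≤ ‖x‖ →
        max (∑ i, x i) 0 ≤ (κ₀ / (4 * C)) * ‖x‖ →
        ∑ i, pd1 (Vq Q m) i x * qdrift ℓ R Γ x u i ≤
          ∑ i, ℓ i * pd1 (Vq Q m) i x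
            - (m * κ₀ / 4) * quadForm Q x ^ (m / 2 - 1) * ‖x‖ ^ 2 :=
  stmt1_general d m hm ℓ R Γ Q hQpos κ₀ hQR
end
end

section
/- Let d ≥ 1, let q ≥ 2 be an even integer, and let κ > 0 and ϑ > 0. Set ε₁ := ϑ/(8κ), β₁ := 1 and, recursively, β_i := (ε₁^q/d^q)·min_{1≤j≤i−1} β_j for 2 ≤ i ≤ d. Then for every Y ∈ ℝ^d, every ξ̃ ∈ [0,1]^d and every c ∈ ℝ^d with |c_i| ≤ κ for all i, one has q·Σ_{i=1}^d β_i Y_i |Y_i|^{q−2}(−c_i ξ̃_i Σ_{j=1}^{i−1} Y_j) ≤ (qϑ/4)·Σ_{i=1}^d β_i |Y_i|^q. -/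
/-!
Each cross term `β_i Y_i |Y_i|^(q-2) c_i ξ̃_i Y_j` with `j < i` is at most
`κ β_i |Y_i|^(q-1) |Y_j|`. Young's inequality with scale `t = ϑ / (8κd)` splits it into
`κ t β_i |Y_i|^q + κ β_i t^(1-q) |Y_j|^q`, and the recursion gives `β_i ≤ t^q β_j`, so the second
part is at most `κ t β_j |Y_j|^q`. Summing over all pairs `j < i` gives at most
`2dκt Σ β_i |Y_i|^q = (ϑ/4) Σ β_i |Y_i|^q`.
-/

set_option autoImplicit false

open Finset

lemma pow_pred_mul_le_pow_add_pow {u v : ℝ} (hu : 0 ≤ u) (hv : 0 ≤ v) {q : ℕ} (hq : 1 ≤ q) :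
    u ^ (q - 1) * v ≤ u ^ q + v ^ q := by
  have hpow : ∀ w : ℝ, w ^ (q - 1) * w = w ^ q := fun w => by rw [← pow_succ, Nat.sub_add_cancel hq]
  rcases le_total u v with h | h
  · calc u ^ (q - 1) * v ≤ v ^ (q - 1) * v := by gcongr
      _ = v ^ q := hpow v
      _ ≤ u ^ q + v ^ q := le_add_of_nonneg_left (by positivity)
  · calc u ^ (q - 1) * v ≤ u ^ (q - 1) * u := by gcongr
      _ = u ^ q := hpow u
      _ ≤ u ^ q + v ^ q := le_add_of_nonneg_right (by positivity)

lemma mul_pow_pred_mul_le_of_le_pow_mul {a b x y t : ℝ} {q : ℕ} (hq : 1 ≤ q) (ha : 0 ≤ a)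
    (hx : 0 ≤ x) (hy : 0 ≤ y) (ht : 0 < t) (hab : a ≤ t ^ q * b) :
    a * (x ^ (q - 1) * y) ≤ t * (a * x ^ q + b * y ^ q) := by
  have hyt : 0 ≤ y / t := by positivity
  calc a * (x ^ (q - 1) * y) = t * a * (x ^ (q - 1) * (y / t)) := by field_simp
    _ ≤ t * a * (x ^ q + (y / t) ^ q) := by
      gcongr
      exact pow_pred_mul_le_pow_add_pow hx hyt hq
    _ = t * (a * x ^ q + a / t ^ q * y ^ q) := by ring
    _ ≤ t * (a * x ^ q + b * y ^ q) := by
      gcongr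
      rwa [div_le_iff₀ (by positivity), mul_comm]

lemma mul_mul_abs_pow_mul_le {b y c ξ s κ : ℝ} {q : ℕ} (hq : 2 ≤ q) (hb : 0 ≤ b)
    (hξ : ξ ∈ Set.Icc (0 : ℝ) 1) (hc : |c| ≤ κ) :
    b * y * |y| ^ (q - 2) * (-c * ξ * s) ≤ κ * (b * (|y| ^ (q - 1) * |s|)) := by
  have hpow : |y| * |y| ^ (q - 2) = |y| ^ (q - 1) := by
    rw [← pow_succ']
    congr 1
    omega
  have hcξ : |c| * ξ ≤ κ := (mul_le_of_le_one_right (abs_nonneg c) hξ.2).trans hc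
  calc b * y * |y| ^ (q - 2) * (-c * ξ * s)
      ≤ |b * y * |y| ^ (q - 2) * (-c * ξ * s)| := le_abs_self _
    _ = (|c| * ξ) * (b * (|y| ^ (q - 1) * |s|)) := by
      simp only [abs_mul, abs_neg, abs_pow, abs_abs, abs_of_nonneg hb, abs_of_nonneg hξ.1, ← hpow]
      ring
    _ ≤ κ * (b * (|y| ^ (q - 1) * |s|)) := by gcongr

lemma sum_sum_add_le_two_mul_card_mul_sum {ι : Type*} [Fintype ι] (s : ι → Finset ι)
    {A : ι → ℝ} (hA : ∀ i, 0 ≤ A i) :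
    ∑ i, ∑ j ∈ s i, (A i + A j) ≤ 2 * Fintype.card ι * ∑ i, A i := by
  have hdiag : ∑ i, ∑ _j ∈ s i, A i ≤ Fintype.card ι * ∑ i, A i := by
    rw [mul_sum]
    gcongr with i
    rw [sum_const, nsmul_eq_mul]
    gcongr
    · exact hA i
    · exact_mod_cast card_le_univ (s i)
  have hoff : ∑ i, ∑ j ∈ s i, A j ≤ Fintype.card ι * ∑ i, A i := by
    calc ∑ i, ∑ j ∈ s i, A j ≤ ∑ _i : ι, ∑ j, A j :=
          sum_le_sum fun i _ => sum_le_sum_of_subset_of_nonneg (subset_univ _) fun j _ _ => hA j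
      _ = Fintype.card ι * ∑ i, A i := by rw [sum_const, card_univ, nsmul_eq_mul]
  simp only [sum_add_distrib]
  linarith

lemma mul_mul_abs_pow_mul_sum_le {ι : Type*} {s : Finset ι} {β Y : ι → ℝ} {i : ι}
    {c ξ κ t : ℝ} {q : ℕ} (hq : 2 ≤ q) (hβi : 0 ≤ β i) (hξ : ξ ∈ Set.Icc (0 : ℝ) 1)
    (hc : |c| ≤ κ) (ht : 0 < t) (hβ : ∀ j ∈ s, β i ≤ t ^ q * β j) :
    β i * Y i * |Y i| ^ (q - 2) * (-c * ξ * ∑ j ∈ s, Y j)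
      ≤ ∑ j ∈ s, κ * t * (β i * |Y i| ^ q + β j * |Y j| ^ q) := by
  have hκ : 0 ≤ κ := (abs_nonneg c).trans hc
  calc _ ≤ κ * (β i * (|Y i| ^ (q - 1) * |∑ j ∈ s, Y j|)) := mul_mul_abs_pow_mul_le hq hβi hξ hc
    _ ≤ κ * (β i * (|Y i| ^ (q - 1) * ∑ j ∈ s, |Y j|)) := by
      gcongr
      exact abs_sum_le_sum_abs Y s
    _ = ∑ j ∈ s, κ * (β i * (|Y i| ^ (q - 1) * |Y j|)) := by simp only [mul_sum]
    _ ≤ ∑ j ∈ s, κ * t * (β i * |Y i| ^ q + β j * |Y j| ^ q) := by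
      refine sum_le_sum fun j hj => ?_
      rw [mul_assoc]
      exact mul_le_mul_of_nonneg_left (mul_pow_pred_mul_le_of_le_pow_mul (by omega) hβi
        (abs_nonneg _) (abs_nonneg _) ht (hβ j hj)) hκ

section RecursiveWeights

variable {d : ℕ} {r : ℝ} {β : Fin d → ℝ}
  (hβ0 : ∀ i : Fin d, i.val = 0 → β i = 1)
  (hβrec : ∀ i : Fin d, ∀ hne : (univ.filter (fun j => j < i)).Nonempty,
    β i = r * (univ.filter (fun j => j < i)).inf' hne β)
include hβrec

lemma le_mul_of_eq_mul_inf' (hr : 0 ≤ r) {i j : Fin d} (hji : j < i) : β i ≤ r * β j := by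
  have hj : j ∈ univ.filter (fun j => j < i) := mem_filter.mpr ⟨mem_univ _, hji⟩
  rw [hβrec i ⟨j, hj⟩]
  exact mul_le_mul_of_nonneg_left (inf'_le β hj) hr

include hβ0 in
lemma pos_of_eq_mul_inf' (hr : 0 < r) (i : Fin d) : 0 < β i := by
  induction i using WellFoundedLT.induction with
  | ind i ih =>
    by_cases hne : (univ.filter (fun j => j < i)).Nonempty
    · obtain ⟨j, hj, hβj⟩ := exists_mem_eq_inf' hne β
      rw [hβrec i hne, hβj]
      exact mul_pos hr (ih j (mem_filter.mp hj).2)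
    · rw [hβ0 i ?_]
      · exact one_pos
      · by_contra h0
        exact hne ⟨⟨0, by omega⟩, mem_filter.mpr ⟨mem_univ _, Fin.mk_lt_of_lt_val (by omega)⟩⟩

end RecursiveWeights

theorem stmt15_general (d : ℕ) (hd : 1 ≤ d) (q : ℕ) (hq2 : 2 ≤ q)
    (κ ϑ : ℝ) (hκ : 0 < κ) (hϑ : 0 < ϑ)
    (β : Fin d → ℝ)
    (hβ0 : ∀ i : Fin d, i.val = 0 → β i = 1)
    (hβrec : ∀ i : Fin d, ∀ hne : (Finset.univ.filter (fun j => j < i)).Nonempty,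
      β i = ((ϑ / (8 * κ)) ^ q / (d : ℝ) ^ q) *
        (Finset.univ.filter (fun j => j < i)).inf' hne β) :
    ∀ (Y ξt c : Fin d → ℝ),
      (∀ i, ξt i ∈ Set.Icc (0:ℝ) 1) → (∀ i, |c i| ≤ κ) →
      (q : ℝ) * ∑ i, β i * Y i * |Y i| ^ (q - 2) *
          (-(c i) * ξt i * ∑ j ∈ Finset.univ.filter (fun j => j < i), Y j)
        ≤ ((q : ℝ) * ϑ / 4) * ∑ i, β i * |Y i| ^ q := by
  intro Y ξt c hξ hc
  have hdpos : (0 : ℝ) < d := by exact_mod_cast hd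
  set t : ℝ := ϑ / (8 * κ * d)
  have ht : 0 < t := by positivity
  rw [show (ϑ / (8 * κ)) ^ q / (d : ℝ) ^ q = t ^ q by rw [← div_pow, div_div]] at hβrec
  have hβ : ∀ i, 0 < β i := pos_of_eq_mul_inf' hβ0 hβrec (by positivity)
  set B : Fin d → ℝ := fun i => β i * |Y i| ^ q
  have hB : ∀ i, 0 ≤ B i := fun i => mul_nonneg (hβ i).le (by positivity)
  calc _ ≤ (q : ℝ) * ∑ i, ∑ j ∈ univ.filter (fun j => j < i), κ * t * (B i + B j) := by
        gcongr with i
        refine mul_mul_abs_pow_mul_sum_le hq2 (hβ i).le (hξ i) (hc i) ht fun j hj => ?_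
        exact le_mul_of_eq_mul_inf' hβrec (by positivity) (mem_filter.mp hj).2
    _ ≤ (q : ℝ) * (κ * t * (2 * d * ∑ i, B i)) := by
        simp only [← mul_sum]
        gcongr
        simpa using sum_sum_add_le_two_mul_card_mul_sum _ hB
    _ = ((q : ℝ) * ϑ / 4) * ∑ i, B i := by
        simp only [t]
        field_simp
        ring

theorem stmt15 (d : ℕ) (hd : 1 ≤ d) (q : ℕ) (hqeven : Even q) (hq2 : 2 ≤ q)
    (κ ϑ : ℝ) (hκ : 0 < κ) (hϑ : 0 < ϑ)
    (β : Fin d → ℝ)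
    (hβ0 : ∀ i : Fin d, i.val = 0 → β i = 1)
    (hβrec : ∀ i : Fin d, ∀ hne : (Finset.univ.filter (fun j => j < i)).Nonempty,
      β i = ((ϑ / (8 * κ)) ^ q / (d : ℝ) ^ q) *
        (Finset.univ.filter (fun j => j < i)).inf' hne β) :
    ∀ (Y ξt c : Fin d → ℝ),
      (∀ i, ξt i ∈ Set.Icc (0:ℝ) 1) → (∀ i, |c i| ≤ κ) →
      (q : ℝ) * ∑ i, β i * Y i * |Y i| ^ (q - 2) *
          (-(c i) * ξt i * ∑ j ∈ Finset.univ.filter (fun j => j < i), Y j)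
        ≤ ((q : ℝ) * ϑ / 4) * ∑ i, β i * |Y i| ^ q :=
  stmt15_general d hd q hq2 κ ϑ hκ hϑ β hβ0 hβrec
end

section
/- Let ρ ∈ (0,1)^d with Σ_{i=1}^d ρ_i = 1 and let n > 0. Then for every i ∈ {1,…,d} and every x ∈ ℝ^d with x ≥ 0 componentwise, there exist ξ ∈ [0,1] and ξ̃ ∈ [0,1] such that [x_i − (n − Σ_{j=1}^{i−1} x_j)⁺]⁺ = ξ(x_i − nρ_i) + ξ̃·Σ_{j=1}^{i−1}(x_j − nρ_j). -/
set_option autoImplicit false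

/-! With `A = x_i - nρ_i` and `B = ∑_{j<i} (x_j - nρ_j)`, the left-hand side lies in
`[0, A⁺ + B⁺]`: it is the positive part of `x_i - (n - ∑_{j<i} x_j)⁺ ≤ A + B + n (∑_{j≤i} ρ_j - 1)`,
and `∑_{j≤i} ρ_j ≤ 1`. Every number of `[0, A⁺ + B⁺]` is `ξ A + ξ̃ B` with `ξ, ξ̃ ∈ [0, 1]`. -/

open Finset

lemma exists_mem_Icc_mul_eq_mul_max (A : ℝ) {t : ℝ} (ht : t ∈ Set.Icc (0 : ℝ) 1) :
    ∃ ξ ∈ Set.Icc (0 : ℝ) 1, ξ * A = t * max A 0 := by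
  rcases le_total 0 A with hA | hA
  · exact ⟨t, ht, by rw [max_eq_left hA]⟩
  · exact ⟨0, Set.left_mem_Icc.2 zero_le_one, by rw [max_eq_right hA]; ring⟩

lemma exists_mem_Icc_mul_add_mul_eq {A B T : ℝ} (h₀ : 0 ≤ T) (h₁ : T ≤ max A 0 + max B 0) :
    ∃ ξ ∈ Set.Icc (0 : ℝ) 1, ∃ η ∈ Set.Icc (0 : ℝ) 1, T = ξ * A + η * B := by
  set M := max A 0 + max B 0
  have hM : 0 ≤ M := by positivity
  have ht : T / M ∈ Set.Icc (0 : ℝ) 1 := ⟨div_nonneg h₀ hM, div_le_one_of_le₀ h₁ hM⟩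
  have hT : T = T / M * M := by
    rcases hM.eq_or_lt with hM0 | hMpos
    · rw [← hM0] at h₁ ⊢; simp [le_antisymm h₁ h₀]
    · exact (div_mul_cancel₀ T hMpos.ne').symm
  obtain ⟨ξ, hξ, hξA⟩ := exists_mem_Icc_mul_eq_mul_max A ht
  obtain ⟨η, hη, hηB⟩ := exists_mem_Icc_mul_eq_mul_max B ht
  exact ⟨ξ, hξ, η, hη, by rw [hξA, hηB, ← mul_add]; exact hT⟩

lemma sum_filter_lt_add_le_sum {ι M : Type*} [Fintype ι] [Preorder ι] [DecidableLT ι]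
    [AddCommMonoid M] [PartialOrder M] [IsOrderedAddMonoid M] {f : ι → M} (hf : ∀ j, 0 ≤ f j) (i : ι) :
    ∑ j ∈ univ.filter (· < i), f j + f i ≤ ∑ j, f j := by
  have hi : i ∉ univ.filter (· < i) := by simp
  rw [add_comm, ← sum_cons hi]
  exact sum_le_sum_of_subset_of_nonneg (subset_univ _) fun j _ _ => hf j

theorem stmt19_general (d : ℕ)
    (ρ : Fin d → ℝ) (hρ : ∀ i, 0 < ρ i ∧ ρ i < 1) (hρsum : ∑ i, ρ i = 1)
    (n : ℝ) (hn : 0 < n) (i : Fin d) (x : Fin d → ℝ) :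
    ∃ ξ ∈ Set.Icc (0:ℝ) 1, ∃ ξt ∈ Set.Icc (0:ℝ) 1,
      max (x i - max (n - ∑ j ∈ Finset.univ.filter (fun j => j < i), x j) 0) 0
        = ξ * (x i - n * ρ i)
          + ξt * ∑ j ∈ Finset.univ.filter (fun j => j < i), (x j - n * ρ j) := by
  have hρle : ∑ j ∈ univ.filter (· < i), ρ j + ρ i ≤ 1 :=
    hρsum ▸ sum_filter_lt_add_le_sum (fun j => (hρ j).1.le) i
  have hle : x i - max (n - ∑ j ∈ univ.filter (· < i), x j) 0
      ≤ (x i - n * ρ i) + ∑ j ∈ univ.filter (· < i), (x j - n * ρ j) := by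
    rw [sum_sub_distrib, ← mul_sum]
    linarith [le_max_left (n - ∑ j ∈ univ.filter (· < i), x j) 0,
      mul_le_mul_of_nonneg_left hρle hn.le]
  refine exists_mem_Icc_mul_add_mul_eq (le_max_right _ _) (max_le ?_ (by positivity))
  exact hle.trans (add_le_add (le_max_left _ _) (le_max_left _ _))

theorem stmt19 (d : ℕ) (hd : 1 ≤ d)
    (ρ : Fin d → ℝ) (hρ : ∀ i, 0 < ρ i ∧ ρ i < 1) (hρsum : ∑ i, ρ i = 1)
    (n : ℝ) (hn : 0 < n) (i : Fin d) (x : Fin d → ℝ) (hx : ∀ j, 0 ≤ x j) :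
    ∃ ξ ∈ Set.Icc (0:ℝ) 1, ∃ ξt ∈ Set.Icc (0:ℝ) 1,
      max (x i - max (n - ∑ j ∈ Finset.univ.filter (fun j => j < i), x j) 0) 0
        = ξ * (x i - n * ρ i)
          + ξt * ∑ j ∈ Finset.univ.filter (fun j => j < i), (x j - n * ρ j) :=
  stmt19_general d ρ hρ hρsum n hn i x
end
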